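/- With notation as above, the categorical Gini covariance satisfies gCov(X,Z) := Δ_F − Σ_{k=1}^K p_k Δ_{k,F} = Σ_{1 ≤ k < l ≤ K} p_k p_l (2Δ_{kl,F} − Δ_{k,F} − Δ_{l,F}). -/
import Mathlib


open MeasureTheory


variable {p : ℕ}
local notation "E" => EuclideanSpace ℝ (Fin p)

lemma aux_int (ν : Measure (EuclideanSpace ℝ (Fin p))) [IsProbabilityMeasure ν]
    (hν : Integrable (fun x => ‖x‖) ν) (x : EuclideanSpace ℝ (Fin p)) :
    Integrable (fun y => ‖x - y‖) ν := by
  refine ((integrable_const ‖x‖).add hν).mono' ?_ ?_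
  · exact (continuous_const.sub continuous_id).norm.aestronglyMeasurable
  · filter_upwards with y
    simpa using norm_sub_le x y

lemma aux_meas (ν : Measure (EuclideanSpace ℝ (Fin p))) [IsProbabilityMeasure ν] :
    StronglyMeasurable (fun x : EuclideanSpace ℝ (Fin p) => ∫ y, ‖x - y‖ ∂ν) := by
  have : Continuous (fun z : (EuclideanSpace ℝ (Fin p)) × (EuclideanSpace ℝ (Fin p)) => ‖z.1 - z.2‖) :=
    (continuous_fst.sub continuous_snd).norm
  exact this.stronglyMeasurable.integral_prod_right'

lemma aux_bound (ν : Measure (EuclideanSpace ℝ (Fin p))) [IsProbabilityMeasure ν]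
    (hν : Integrable (fun x => ‖x‖) ν) (x : EuclideanSpace ℝ (Fin p)) :
    ∫ y, ‖x - y‖ ∂ν ≤ ‖x‖ + ∫ y, ‖y‖ ∂ν := by
  have h1 : ∫ y, ‖x - y‖ ∂ν ≤ ∫ y, (‖x‖ + ‖y‖) ∂ν := by
    refine integral_mono (aux_int ν hν x) ((integrable_const ‖x‖).add hν) fun y => norm_sub_le x y
  calc ∫ y, ‖x - y‖ ∂ν ≤ ∫ y, (‖x‖ + ‖y‖) ∂ν := h1
    _ = ‖x‖ + ∫ y, ‖y‖ ∂ν := by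
        rw [integral_add (integrable_const _) hν, integral_const]
        simp

lemma aux_int2 (μ ν : Measure (EuclideanSpace ℝ (Fin p))) [IsProbabilityMeasure μ]
    [IsProbabilityMeasure ν] (hμ : Integrable (fun x => ‖x‖) μ)
    (hν : Integrable (fun x => ‖x‖) ν) :
    Integrable (fun x => ∫ y, ‖x - y‖ ∂ν) μ := by
  refine ((integrable_const (∫ y, ‖y‖ ∂ν)).add hμ).mono' (aux_meas ν).aestronglyMeasurable ?_
  filter_upwards with x
  rw [Real.norm_eq_abs, abs_of_nonneg (integral_nonneg fun y => norm_nonneg _)]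
  have := aux_bound ν hν x
  simp only [Pi.add_apply]
  linarith [this]

lemma aux_sym (μ ν : Measure (EuclideanSpace ℝ (Fin p))) [IsProbabilityMeasure μ]
    [IsProbabilityMeasure ν] (hμ : Integrable (fun x => ‖x‖) μ)
    (hν : Integrable (fun x => ‖x‖) ν) :
    ∫ x, ∫ y, ‖x - y‖ ∂ν ∂μ = ∫ x, ∫ y, ‖x - y‖ ∂μ ∂ν := by
  have hmeas : AEStronglyMeasurable
      (fun z : (EuclideanSpace ℝ (Fin p)) × (EuclideanSpace ℝ (Fin p)) => ‖z.1 - z.2‖)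
      (μ.prod ν) :=
    ((continuous_fst.sub continuous_snd).norm).aestronglyMeasurable
  have hI : Integrable (Function.uncurry fun x y => ‖x - y‖) (μ.prod ν) := by
    refine (integrable_prod_iff hmeas).2 ⟨?_, ?_⟩
    · filter_upwards with x
      exact aux_int ν hν x
    · simpa [Real.norm_eq_abs, abs_of_nonneg (norm_nonneg _)] using aux_int2 μ ν hμ hν
  rw [integral_integral_swap hI]
  congr 1
  ext y
  congr 1
  ext x
  rw [norm_sub_rev]

lemma alg_lemma {K : ℕ} (w : Fin K → ℝ) (hsum : ∑ k, w k = 1) (Δ : Fin K → Fin K → ℝ)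
    (hsym : ∀ k l, Δ k l = Δ l k) :
    (∑ k, w k * ∑ l, w l * Δ k l) - ∑ k, w k * Δ k k
      = ∑ kl ∈ Finset.univ.filter (fun kl : Fin K × Fin K => kl.1 < kl.2),
          w kl.1 * w kl.2 * (2 * Δ kl.1 kl.2 - Δ kl.1 kl.1 - Δ kl.2 kl.2) := by
  set T : Fin K × Fin K → ℝ := fun kl => w kl.1 * w kl.2 * (Δ kl.1 kl.2 - Δ kl.1 kl.1) with hT
  have h1 : (∑ k, w k * ∑ l, w l * Δ k l) - ∑ k, w k * Δ k k
      = ∑ kl ∈ (Finset.univ ×ˢ Finset.univ : Finset (Fin K × Fin K)), T kl := by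
    rw [Finset.sum_product]
    have : ∑ k, w k * Δ k k = ∑ k : Fin K, ∑ l : Fin K, w k * w l * Δ k k := by
      refine Finset.sum_congr rfl fun k _ => ?_
      rw [show w k * Δ k k = (∑ l : Fin K, w l) * (w k * Δ k k) from by rw [hsum, one_mul],
        Finset.sum_mul]
      exact Finset.sum_congr rfl fun l _ => by ring
    rw [this, ← Finset.sum_sub_distrib]
    refine Finset.sum_congr rfl fun k _ => ?_
    rw [Finset.mul_sum, ← Finset.sum_sub_distrib]
    refine Finset.sum_congr rfl fun l _ => ?_
    simp only [hT]
    ring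
  rw [h1]
  rw [← Finset.sum_filter_add_sum_filter_not (Finset.univ ×ˢ Finset.univ)
    (fun kl : Fin K × Fin K => kl.1 < kl.2) T]
  rw [← Finset.sum_filter_add_sum_filter_not
    ((Finset.univ ×ˢ Finset.univ).filter (fun kl : Fin K × Fin K => ¬ kl.1 < kl.2))
    (fun kl : Fin K × Fin K => kl.2 < kl.1) T]
  have hdiag : ∑ kl ∈ (((Finset.univ ×ˢ Finset.univ).filter
      (fun kl : Fin K × Fin K => ¬ kl.1 < kl.2)).filter
      (fun kl : Fin K × Fin K => ¬ kl.2 < kl.1)), T kl = 0 := by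
    refine Finset.sum_eq_zero fun kl hkl => ?_
    simp only [Finset.mem_filter] at hkl
    have : kl.1 = kl.2 := le_antisymm (not_lt.1 hkl.2) (not_lt.1 hkl.1.2)
    simp only [hT, ← this, sub_self, mul_zero]
  have hgt : ∑ kl ∈ (((Finset.univ ×ˢ Finset.univ).filter
      (fun kl : Fin K × Fin K => ¬ kl.1 < kl.2)).filter
      (fun kl : Fin K × Fin K => kl.2 < kl.1)), T kl
      = ∑ kl ∈ ((Finset.univ ×ˢ Finset.univ).filter
      (fun kl : Fin K × Fin K => kl.1 < kl.2)), T kl.swap := by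
    refine Finset.sum_equiv (Equiv.prodComm (Fin K) (Fin K)) ?_ ?_
    · intro kl
      simp only [Finset.mem_filter, Finset.mem_product, Finset.mem_univ, true_and,
        Equiv.prodComm_apply, Prod.fst_swap, Prod.snd_swap]
      constructor
      · rintro ⟨-, h⟩; exact h
      · intro h; exact ⟨not_lt.2 h.le, h⟩
    · intro kl _
      simp
  rw [hdiag, add_zero, hgt, ← Finset.sum_add_distrib]
  rw [show Finset.univ ×ˢ Finset.univ = (Finset.univ : Finset (Fin K × Fin K)) by
    simp [Finset.univ_product_univ]]
  refine Finset.sum_congr rfl fun kl hkl => ?_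
  simp only [hT, Prod.fst_swap, Prod.snd_swap]
  rw [hsym kl.2 kl.1]
  ring


/-- categorical Gini covariance identity,
gCov(X,Z) = Δ_F − Σ_k p_k Δ_{k,F} = Σ_{k<l} p_k p_l (2Δ_{kl,F} − Δ_{k,F} − Δ_{l,F}). -/
theorem gini_covariance_pairwise_form
    {p K : ℕ} (F : Fin K → Measure (EuclideanSpace ℝ (Fin p)))
    (hF : ∀ k, IsProbabilityMeasure (F k))
    (w : Fin K → ℝ) (hw : ∀ k, 0 < w k) (hsum : ∑ k, w k = 1)
    (hint : ∀ k, Integrable (fun x => ‖x‖) (F k))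
    (Δ : Fin K → Fin K → ℝ)
    (hΔ : ∀ k l, Δ k l = ∫ x, ∫ y, ‖x - y‖ ∂(F l) ∂(F k))
    (ΔF : ℝ)
    (hΔF : ΔF = ∫ x, ∫ y, ‖x - y‖ ∂(∑ k, (ENNReal.ofReal (w k)) • F k)
        ∂(∑ k, (ENNReal.ofReal (w k)) • F k)) :
    ΔF - ∑ k, w k * Δ k k
      = ∑ kl ∈ Finset.univ.filter (fun kl : Fin K × Fin K => kl.1 < kl.2),
          w kl.1 * w kl.2 * (2 * Δ kl.1 kl.2 - Δ kl.1 kl.1 - Δ kl.2 kl.2) := by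
  haveI : ∀ k, IsProbabilityMeasure (F k) := hF
  set μ : Measure (EuclideanSpace ℝ (Fin p)) := ∑ k, (ENNReal.ofReal (w k)) • F k with hμ
  -- inner integral expansion
  have hinner : ∀ x, ∫ y, ‖x - y‖ ∂μ = ∑ l, w l * ∫ y, ‖x - y‖ ∂(F l) := by
    intro x
    rw [hμ, integral_finset_sum_measure
      (fun l _ => (aux_int (F l) (hint l) x).smul_measure ENNReal.ofReal_ne_top)]
    refine Finset.sum_congr rfl fun l _ => ?_
    rw [integral_smul_measure, ENNReal.toReal_ofReal (hw l).le, smul_eq_mul]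
  -- integrability of each h_l against each F k, and of the sum
  have hIsum : ∀ k, Integrable
      (fun x => ∑ l, w l * ∫ y, ‖x - y‖ ∂(F l)) (F k) := by
    intro k
    exact integrable_finset_sum _ fun l _ =>
      (aux_int2 (F k) (F l) (hint k) (hint l)).const_mul (w l)
  have hΔFval : ΔF = ∑ k, w k * ∑ l, w l * Δ k l := by
    rw [hΔF]
    have h1 : ∫ x, ∫ y, ‖x - y‖ ∂μ ∂μ
        = ∫ x, ∑ l, w l * ∫ y, ‖x - y‖ ∂(F l) ∂μ := by
      exact integral_congr_ae (Filter.Eventually.of_forall hinner)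
    rw [h1, hμ,
      integral_finset_sum_measure
        (fun k _ => (hIsum k).smul_measure ENNReal.ofReal_ne_top)]
    refine Finset.sum_congr rfl fun k _ => ?_
    rw [integral_smul_measure, ENNReal.toReal_ofReal (hw k).le, smul_eq_mul]
    congr 1
    rw [integral_finset_sum _ fun l _ =>
      (aux_int2 (F k) (F l) (hint k) (hint l)).const_mul (w l)]
    refine Finset.sum_congr rfl fun l _ => ?_
    rw [MeasureTheory.integral_const_mul, hΔ k l]
  have hsym : ∀ k l, Δ k l = Δ l k := by
    intro k l
    rw [hΔ k l, hΔ l k]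
    exact aux_sym (F k) (F l) (hint k) (hint l)
  rw [hΔFval]
  exact alg_lemma w hsum Δ hsym
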